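/- For any t ≥ 1, the Koszul-type complex 0 → R^{n−1} → R^n → R → R/I_{n,t} → 0, where the first map sends the j-th basis vector to (−x_1^t, 0, …, 0, x_{j+1}^t, 0, …, 0) and the second map sends the i-th basis vector to x^{e_i}, is exact; hence R/I_{n,t} has projective dimension at most 2. -/

import Mathlib

/-!
Write `a i = x_i^t` and `e i = ∏_{j ≠ i} a j`, so that `a i * e i = ∏ a` for every `i`.
The `j`-th column of the matrix is `a (j+1) • δ_{j+1} - a 0 • δ_0`, which the second map
sends to `∏ a - ∏ a = 0`; its rows `1, …, n-1` form a diagonal matrix with nonzero entries,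
whence injectivity. If `∑ v i * e i = 0`, then `a i` divides `v i * e i = -∑_{l ≠ i} v l * e l`,
and since the `a i` are pairwise relatively prime, `a i ∣ v i`. Subtracting the image of
`(v (j+1) / a (j+1))_j` leaves a vector supported at `0`, which must vanish as `e 0 ≠ 0`.
-/

open MvPolynomial Finset Function Matrix

theorem LinearMap.sum_smulRight_proj {R ι : Type*} [CommSemiring R] [Fintype ι] (b : ι → R) :
    ∑ i, (LinearMap.proj i : (ι → R) →ₗ[R] R).smulRight (b i) = Fintype.linearCombination R b := by
  ext v
  simp [Fintype.linearCombination_apply]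

theorem dvd_of_sum_mul_prod_erase_eq_zero {ι R : Type*} [Fintype ι] [DecidableEq ι] [CommRing R]
    [DecompositionMonoid R] {a v : ι → R}
    (hcop : Pairwise (IsRelPrime on a)) (hv : ∑ i, v i * ∏ j ∈ univ.erase i, a j = 0) (i : ι) :
    a i ∣ v i := by
  have hsplit := add_sum_erase univ (fun l => v l * ∏ j ∈ univ.erase l, a j) (mem_univ i)
  rw [hv, add_eq_zero_iff_eq_neg] at hsplit
  have hdvd : a i ∣ v i * ∏ j ∈ univ.erase i, a j := by
    rw [hsplit, dvd_neg]
    exact dvd_sum fun l hl => (dvd_prod_of_mem _ (mem_erase.mpr ⟨(ne_of_mem_erase hl).symm,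
      mem_univ i⟩)).mul_left _
  exact (IsRelPrime.prod_right fun j hj => hcop (ne_of_mem_erase hj).symm).dvd_of_dvd_mul_right
    hdvd

section Syzygy

variable {R : Type*} [CommRing R] {n : ℕ}

def syzygyMatrix (a : Fin n → R) (h0 : 0 < n) : Matrix (Fin n) (Fin (n - 1)) R :=
  Matrix.of fun i j => if (i : ℕ) = 0 then -a ⟨0, h0⟩ else if (i : ℕ) = j + 1 then a i else 0

variable (a : Fin n → R) (h0 : 0 < n)

theorem syzygyMatrix_mulVec_succ (c : Fin (n - 1) → R) (j : Fin (n - 1)) (hj : (j : ℕ) + 1 < n) :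
    (syzygyMatrix a h0 *ᵥ c) ⟨j + 1, hj⟩ = a ⟨j + 1, hj⟩ * c j := by
  simp [syzygyMatrix, Matrix.mulVec, dotProduct, Fin.val_eq_val]

theorem sum_syzygyMatrix_mul_prod_erase (j : Fin (n - 1)) :
    ∑ i, syzygyMatrix a h0 i j * ∏ l ∈ univ.erase i, a l = 0 := by
  have hj : (j : ℕ) + 1 < n := by omega
  rw [Fintype.sum_eq_add ⟨0, h0⟩ ⟨j + 1, hj⟩ (by simp [Fin.ext_iff])]
  · simp [syzygyMatrix, mul_prod_erase]
  · rintro i ⟨hi0, hij⟩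
    simp_all [syzygyMatrix, Fin.ext_iff]

theorem linearCombination_prod_erase_comp_toLin'_syzygyMatrix :
    Fintype.linearCombination R (fun i => ∏ l ∈ univ.erase i, a l) ∘ₗ
      toLin' (syzygyMatrix a h0) = 0 := by
  ext j
  simp [Fintype.linearCombination_apply, ← sum_syzygyMatrix_mul_prod_erase a h0 j]

theorem toLin'_syzygyMatrix_injective [IsDomain R] (ha : ∀ i, a i ≠ 0) :
    Injective (toLin' (syzygyMatrix a h0)) := by
  intro c c' h
  ext j
  have hj : (j : ℕ) + 1 < n := by omega
  have := congrFun h ⟨j + 1, hj⟩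
  simp only [toLin'_apply, syzygyMatrix_mulVec_succ] at this
  exact mul_left_cancel₀ (ha _) this

theorem exact_toLin'_syzygyMatrix [IsDomain R] [DecompositionMonoid R] (ha : ∀ i, a i ≠ 0)
    (hcop : Pairwise (IsRelPrime on a)) :
    Exact (toLin' (syzygyMatrix a h0))
      (Fintype.linearCombination R (fun i => ∏ l ∈ univ.erase i, a l)) := by
  set ψ := Fintype.linearCombination R (fun i => ∏ l ∈ univ.erase i, a l)
  refine LinearMap.exact_of_comp_of_mem_range
    (linearCombination_prod_erase_comp_toLin'_syzygyMatrix a h0) fun v hv => ?_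
  choose w hw using dvd_of_sum_mul_prod_erase_eq_zero hcop
    (by simpa only [ψ, Fintype.linearCombination_apply, smul_eq_mul] using hv)
  set c : Fin (n - 1) → R := fun j => w ⟨j + 1, by omega⟩
  refine ⟨c, ?_⟩
  set u := v - toLin' (syzygyMatrix a h0) c
  have hu : ∀ i, i ≠ ⟨0, h0⟩ → u i = 0 := by
    intro i hi
    obtain ⟨j, rfl⟩ : ∃ j : Fin (n - 1), i = ⟨j + 1, by omega⟩ :=
      ⟨⟨i - 1, by omega⟩, Fin.ext (by simp [Fin.ext_iff] at hi; simp; omega)⟩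
    simp [u, syzygyMatrix_mulVec_succ, c, hw]
  have hψu : ψ u = 0 := by
    rw [map_sub, hv, ← LinearMap.comp_apply,
      linearCombination_prod_erase_comp_toLin'_syzygyMatrix, LinearMap.zero_apply, sub_zero]
  rw [Fintype.linearCombination_apply,
    Fintype.sum_eq_single _ fun i hi => by rw [hu i hi, zero_smul],
    smul_eq_mul, mul_eq_zero, prod_eq_zero_iff] at hψu
  have hu0 : u ⟨0, h0⟩ = 0 := hψu.resolve_right fun ⟨j, _, hj⟩ => ha j hj
  have hu_eq_zero : u = 0 := by
    ext i
    obtain rfl | hi := eq_or_ne i ⟨0, h0⟩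
    exacts [hu0, hu i hi]
  exact (sub_eq_zero.mp hu_eq_zero).symm

end Syzygy

theorem MvPolynomial.pairwise_isRelPrime_X_pow {σ R : Type*} [CommRing R] [IsDomain R]
    [UniqueFactorizationMonoid R] (t : ℕ) :
    Pairwise (IsRelPrime on fun i : σ => (X i : MvPolynomial σ R) ^ t) := fun _ _ hij =>
  (X_prime.irreducible.isRelPrime_iff_not_dvd.mpr fun h => hij (X_dvd_X.mp h)).pow_left.pow_right

/-- The Koszul-type complex `0 → R^{n−1} → R^n → R → R/I_{n,t} → 0` is exact:
the first map (given by the matrix with `−x_1^t` in the first row and `x_{j+1}^t`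
in position `(j+1, j)`) is injective, the complex is exact at `R^n`, and the
image of the second map (sending the `i`-th basis vector to `x^{e_i}`) is
exactly `I_{n,t}` (so that the induced sequence ending in `R/I_{n,t} → 0` is
exact); hence `R/I_{n,t}` has projective dimension at most `2`. -/
theorem stmt_14 (k : Type*) [Field k] (n t : ℕ) (hn : 3 ≤ n) :
    Function.Injective (Matrix.toLin'
      (Matrix.of fun (i : Fin n) (j : Fin (n - 1)) =>
        if (i : ℕ) = 0 then -((X (⟨0, by omega⟩ : Fin n) : MvPolynomial (Fin n) k) ^ t)
        else if (i : ℕ) = (j : ℕ) + 1 then (X i : MvPolynomial (Fin n) k) ^ t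
        else 0)) ∧
    Function.Exact (Matrix.toLin'
      (Matrix.of fun (i : Fin n) (j : Fin (n - 1)) =>
        if (i : ℕ) = 0 then -((X (⟨0, by omega⟩ : Fin n) : MvPolynomial (Fin n) k) ^ t)
        else if (i : ℕ) = (j : ℕ) + 1 then (X i : MvPolynomial (Fin n) k) ^ t
        else 0))
      (∑ i : Fin n, LinearMap.smulRight (LinearMap.proj i : (Fin n → MvPolynomial (Fin n) k) →ₗ[MvPolynomial (Fin n) k] MvPolynomial (Fin n) k)
        (∏ j ∈ Finset.univ.erase i, (X j : MvPolynomial (Fin n) k) ^ t)) ∧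
    LinearMap.range (∑ i : Fin n, LinearMap.smulRight (LinearMap.proj i : (Fin n → MvPolynomial (Fin n) k) →ₗ[MvPolynomial (Fin n) k] MvPolynomial (Fin n) k)
        (∏ j ∈ Finset.univ.erase i, (X j : MvPolynomial (Fin n) k) ^ t))
      = Ideal.span (Set.range fun i : Fin n =>
          ∏ j ∈ Finset.univ.erase i, (X j : MvPolynomial (Fin n) k) ^ t) := by
  have h0 : 0 < n := by omega
  have ha : ∀ i : Fin n, (X i : MvPolynomial (Fin n) k) ^ t ≠ 0 :=
    fun i => pow_ne_zero _ (X_ne_zero i)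
  rw [← LinearMap.coe_sum, LinearMap.sum_smulRight_proj]
  exact ⟨toLin'_syzygyMatrix_injective _ h0 ha,
    exact_toLin'_syzygyMatrix _ h0 ha (pairwise_isRelPrime_X_pow t),
    Fintype.range_linearCombination _ _⟩
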